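/- Let K₀ be a real N₀ × d_x matrix, K_b a real N_b × d_x matrix, V₀ a real N₀ × d_y matrix, and V_b a real N_b × d_y matrix, with N₀, N_b ≥ 1. Suppose there exists c > 0 such that K₀ᵀ K₀ = N₀ c · I_{d_x} and K_bᵀ K_b = N_b c · I_{d_x}. Let W₀ = (K₀ᵀ K₀)⁻¹ K₀ᵀ V₀ and W_b = (K_bᵀ K_b)⁻¹ K_bᵀ V_b be the per-batch least-squares solutions, and let K and V be the stacked key and value matrices of the combined data. Then the combined least-squares solution (Kᵀ K)⁻¹ Kᵀ V equals the count-weighted average (N₀ / (N₀ + N_b)) W₀ + (N_b / (N₀ + N_b)) W_b. -/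

import Mathlib

/-!
Stacking rows adds Gram matrices: `[K₀; K_b]ᵀ [V₀; V_b] = K₀ᵀ V₀ + K_bᵀ V_b`. When the per-batch
Gram matrices are the scalars `a • 1` and `b • 1`, the combined one is `(a + b) • 1`, so the
combined solution is `(a + b)⁻¹ • (K₀ᵀ V₀ + K_bᵀ V_b)`; since `Kᵢᵀ Vᵢ` is `a` (resp. `b`) times the
per-batch solution, this is the `a : b` weighted average of the two. With `a = N₀ c`, `b = N_b c`
the factor `c` cancels from the weights.
-/

open Matrix

namespace Matrix

variable {m m' n p K : Type*} [Fintype m] [Fintype m']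

theorem transpose_fromRows_mul_fromRows {R : Type*} [Semiring R]
    (A₁ : Matrix m n R) (A₂ : Matrix m' n R) (B₁ : Matrix m p R) (B₂ : Matrix m' p R) :
    (fromRows A₁ A₂)ᵀ * fromRows B₁ B₂ = A₁ᵀ * B₁ + A₂ᵀ * B₂ := by
  rw [transpose_fromRows, fromCols_mul_fromRows]

variable [Fintype n] [DecidableEq n] [Field K]

theorem inv_smul_one (a : K) : (a • (1 : Matrix n n K))⁻¹ = a⁻¹ • 1 := by
  rcases eq_or_ne a 0 with rfl | ha
  · simp only [zero_smul, inv_zero, _root_.inv_zero]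
  · refine inv_eq_right_inv ?_
    rw [smul_mul, Matrix.one_mul, smul_smul, mul_inv_cancel₀ ha, one_smul]

noncomputable def leastSquares (A : Matrix m n K) (B : Matrix m p K) : Matrix n p K :=
  (Aᵀ * A)⁻¹ * (Aᵀ * B)

theorem leastSquares_of_gram_eq_smul_one {A : Matrix m n K} {a : K} (hA : Aᵀ * A = a • 1)
    (B : Matrix m p K) : leastSquares A B = a⁻¹ • (Aᵀ * B) := by
  rw [leastSquares, hA, inv_smul_one, smul_mul, Matrix.one_mul]

theorem leastSquares_fromRows_of_gram_eq_smul_one {A₁ : Matrix m n K} {A₂ : Matrix m' n K}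
    {a b : K} (hA₁ : A₁ᵀ * A₁ = a • 1) (hA₂ : A₂ᵀ * A₂ = b • 1) (ha : a ≠ 0) (hb : b ≠ 0)
    (B₁ : Matrix m p K) (B₂ : Matrix m' p K) :
    leastSquares (fromRows A₁ A₂) (fromRows B₁ B₂) =
      (a / (a + b)) • leastSquares A₁ B₁ + (b / (a + b)) • leastSquares A₂ B₂ := by
  have hA : (fromRows A₁ A₂)ᵀ * fromRows A₁ A₂ = (a + b) • 1 := by
    rw [transpose_fromRows_mul_fromRows, hA₁, hA₂, add_smul]
  have weight {x : K} (hx : x ≠ 0) : x / (a + b) * x⁻¹ = (a + b)⁻¹ := by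
    rw [div_mul_eq_mul_div, mul_inv_cancel₀ hx, one_div]
  rw [leastSquares_of_gram_eq_smul_one hA, leastSquares_of_gram_eq_smul_one hA₁,
    leastSquares_of_gram_eq_smul_one hA₂, transpose_fromRows_mul_fromRows, smul_add, smul_smul,
    smul_smul, weight ha, weight hb]

end Matrix

/-- if `K₀ᵀ K₀ = N₀ c · I` and `K_bᵀ K_b = N_b c · I` with `c > 0` and
`N₀, N_b ≥ 1`, then the least-squares solution for the stacked data equals the
count-weighted average of the per-batch least-squares solutions:
`(Kᵀ K)⁻¹ Kᵀ V = (N₀/(N₀+N_b)) W₀ + (N_b/(N₀+N_b)) W_b`. -/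
theorem count_weighted_fast_weight_average (N0 Nb dx dy : ℕ)
    (hN0 : 1 ≤ N0) (hNb : 1 ≤ Nb)
    (K0 : Matrix (Fin N0) (Fin dx) ℝ) (Kb : Matrix (Fin Nb) (Fin dx) ℝ)
    (V0 : Matrix (Fin N0) (Fin dy) ℝ) (Vb : Matrix (Fin Nb) (Fin dy) ℝ)
    (c : ℝ) (hc : 0 < c)
    (hK0 : K0ᵀ * K0 = ((N0 : ℝ) * c) • (1 : Matrix (Fin dx) (Fin dx) ℝ))
    (hKb : Kbᵀ * Kb = ((Nb : ℝ) * c) • (1 : Matrix (Fin dx) (Fin dx) ℝ))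
    (W0 Wb : Matrix (Fin dx) (Fin dy) ℝ)
    (hW0 : W0 = (K0ᵀ * K0)⁻¹ * (K0ᵀ * V0))
    (hWb : Wb = (Kbᵀ * Kb)⁻¹ * (Kbᵀ * Vb))
    (K : Matrix (Fin N0 ⊕ Fin Nb) (Fin dx) ℝ) (hK : K = Matrix.fromRows K0 Kb)
    (V : Matrix (Fin N0 ⊕ Fin Nb) (Fin dy) ℝ) (hV : V = Matrix.fromRows V0 Vb) :
    (Kᵀ * K)⁻¹ * (Kᵀ * V) =
      ((N0 : ℝ) / ((N0 : ℝ) + (Nb : ℝ))) • W0 +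
        ((Nb : ℝ) / ((N0 : ℝ) + (Nb : ℝ))) • Wb := by
  subst hK hV hW0 hWb
  have hN0c : (N0 : ℝ) * c ≠ 0 := by positivity
  have hNbc : (Nb : ℝ) * c ≠ 0 := by positivity
  have := leastSquares_fromRows_of_gram_eq_smul_one hK0 hKb hN0c hNbc V0 Vb
  rwa [← add_mul, mul_div_mul_right _ _ hc.ne', mul_div_mul_right _ _ hc.ne'] at this
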